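/- arXiv:1401.6926 — 4 statements merged into one kernel-verified Lean document; each statement's English description precedes it below -/
import Mathlib

section
/- Let V be a finite-dimensional real inner product space, let S ⊂ V be a linear subspace of codimension one with nonzero normal vector n (that is, S = {u ∈ V : ⟨n, u⟩ = 0}). Then for every nonzero v ∈ V and every nonzero u ∈ S, sin²(∠(u, v)) ≥ cos²(∠(n, v)) = ⟨n, v⟩² / (‖n‖² ‖v‖²). -/
open InnerProductGeometry
open scoped RealInnerProductSpace

/-- Let `V` be a finite-dimensional real inner product space and `S ⊂ V` a
subspace of codimension one with nonzero normal vector `n`, i.e. `S = {u | ⟪n, u⟫ = 0}`. Then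
for every nonzero `v ∈ V` and nonzero `u ∈ S`,
`sin²(∠(u,v)) ≥ cos²(∠(n,v)) = ⟪n,v⟫²/(‖n‖²‖v‖²)`. -/
theorem sin_sq_angle_ge_cos_sq_angle_normal
    {V : Type*} [NormedAddCommGroup V] [InnerProductSpace ℝ V] [FiniteDimensional ℝ V]
    (nv : V) (hnv : nv ≠ 0) (S : Submodule ℝ V)
    (hS : ∀ u : V, u ∈ S ↔ ⟪nv, u⟫ = 0)
    (v : V) (hv : v ≠ 0) (u : V) (hu : u ∈ S) (hu0 : u ≠ 0) :
    Real.sin (angle u v) ^ 2 ≥ Real.cos (angle nv v) ^ 2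
      ∧ Real.cos (angle nv v) ^ 2 = ⟪nv, v⟫ ^ 2 / (‖nv‖ ^ 2 * ‖v‖ ^ 2) := by
  have hun : ⟪nv, u⟫ = 0 := (hS u).mp hu
  have hnu : ⟪u, nv⟫ = 0 := by rw [real_inner_comm]; exact hun
  have hupos : (0:ℝ) < ‖u‖ := norm_pos_iff.mpr hu0
  have hnpos : (0:ℝ) < ‖nv‖ := norm_pos_iff.mpr hnv
  have hvpos : (0:ℝ) < ‖v‖ := norm_pos_iff.mpr hv
  set a := ⟪u, v⟫ with ha
  set b := ⟪nv, v⟫ with hb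
  -- Bessel-type inequality
  have key : a ^ 2 / ‖u‖ ^ 2 + b ^ 2 / ‖nv‖ ^ 2 ≤ ‖v‖ ^ 2 := by
    have h0 : (0:ℝ) ≤ ⟪v - (a / ‖u‖ ^ 2) • u - (b / ‖nv‖ ^ 2) • nv,
        v - (a / ‖u‖ ^ 2) • u - (b / ‖nv‖ ^ 2) • nv⟫ := real_inner_self_nonneg
    have hexp : ⟪v - (a / ‖u‖ ^ 2) • u - (b / ‖nv‖ ^ 2) • nv,
        v - (a / ‖u‖ ^ 2) • u - (b / ‖nv‖ ^ 2) • nv⟫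
        = ‖v‖ ^ 2 - a ^ 2 / ‖u‖ ^ 2 - b ^ 2 / ‖nv‖ ^ 2 := by
      simp only [inner_sub_left, inner_sub_right, real_inner_smul_left,
        real_inner_smul_right, hun, hnu, real_inner_self_eq_norm_sq,
        real_inner_comm u v, real_inner_comm nv v, ← ha, ← hb,
        norm_smul, Real.norm_eq_abs, mul_pow, sq_abs]
      field_simp
      ring
    rw [hexp] at h0
    linarith
  have hcos : Real.cos (angle nv v) ^ 2 = b ^ 2 / (‖nv‖ ^ 2 * ‖v‖ ^ 2) := by
    rw [cos_angle, div_pow, mul_pow]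
  refine ⟨?_, hcos⟩
  have hsin : Real.sin (angle u v) ^ 2 = 1 - a ^ 2 / (‖u‖ ^ 2 * ‖v‖ ^ 2) := by
    rw [Real.sin_sq, cos_angle, div_pow, mul_pow]
  rw [hsin, hcos]
  rw [ge_iff_le, div_le_iff₀ (by positivity), sub_mul]
  have h1 : a ^ 2 / (‖u‖ ^ 2 * ‖v‖ ^ 2) * (‖nv‖ ^ 2 * ‖v‖ ^ 2)
      = (a ^ 2 / ‖u‖ ^ 2) * ‖nv‖ ^ 2 := by field_simp
  have h2 : b ^ 2 ≤ (‖v‖ ^ 2 - a ^ 2 / ‖u‖ ^ 2) * ‖nv‖ ^ 2 := by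
    have := mul_le_mul_of_nonneg_right (by linarith [key] :
      b ^ 2 / ‖nv‖ ^ 2 ≤ ‖v‖ ^ 2 - a ^ 2 / ‖u‖ ^ 2) (le_of_lt (by positivity : (0:ℝ) < ‖nv‖ ^ 2))
    rwa [div_mul_cancel₀] at this
    positivity
  calc b ^ 2 ≤ (‖v‖ ^ 2 - a ^ 2 / ‖u‖ ^ 2) * ‖nv‖ ^ 2 := h2
    _ = 1 * (‖nv‖ ^ 2 * ‖v‖ ^ 2) - a ^ 2 / (‖u‖ ^ 2 * ‖v‖ ^ 2) * (‖nv‖ ^ 2 * ‖v‖ ^ 2) := by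
        rw [h1]; ring
end

section
/- Let p ≥ 1, n ≥ 1, and let z₁,…,zₙ be i.i.d. standard Gaussian vectors in ℝᵖ with xᵢ = zᵢ/‖zᵢ‖. Then for every t ≥ 0, with probability at least 1 − 2·exp(−n t²/(2(1 + 1.7 t))), it holds simultaneously for all symmetric p×p real matrices U that |Tr( ((p/n)∑ᵢ xᵢxᵢᵀ − I) U )| ≤ t·p·‖U‖_F. -/
open MeasureTheory ProbabilityTheory Matrix

/-- The standard Gaussian measure `N(0, I_p)` on `ℝᵖ`, as the `p`-fold product of
standard normal distributions. -/
noncomputable def stdGaussian (p : ℕ) : Measure (Fin p → ℝ) :=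
  Measure.pi fun _ => gaussianReal 0 1

/-- Euclidean norm of a vector in `ℝᵖ`. -/
noncomputable def euclNorm {p : ℕ} (v : Fin p → ℝ) : ℝ := Real.sqrt (v ⬝ᵥ v)

/-- Frobenius norm of a real matrix. -/
noncomputable def frobNorm {p : ℕ} (A : Matrix (Fin p) (Fin p) ℝ) : ℝ :=
  Real.sqrt (Matrix.trace (Aᵀ * A))

/-- Spectral (L2 operator) norm of a real matrix. -/
noncomputable def specNorm {p : ℕ} (A : Matrix (Fin p) (Fin p) ℝ) : ℝ :=
  sSup {r : ℝ | ∃ v : Fin p → ℝ, euclNorm v = 1 ∧ r = euclNorm (A.mulVec v)}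

/-- Minimal eigenvalue of a symmetric real matrix (via the Rayleigh quotient). -/
noncomputable def lambdaMin {p : ℕ} (A : Matrix (Fin p) (Fin p) ℝ) : ℝ :=
  sInf {r : ℝ | ∃ v : Fin p → ℝ, euclNorm v = 1 ∧ r = v ⬝ᵥ A.mulVec v}

/-- Maximal eigenvalue of a symmetric real matrix (via the Rayleigh quotient). -/
noncomputable def lambdaMax {p : ℕ} (A : Matrix (Fin p) (Fin p) ℝ) : ℝ :=
  sSup {r : ℝ | ∃ v : Fin p → ℝ, euclNorm v = 1 ∧ r = v ⬝ᵥ A.mulVec v}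

/-- Normalization of a vector to the unit sphere: `z ↦ z / ‖z‖`. -/
noncomputable def unitize {p : ℕ} (z : Fin p → ℝ) : Fin p → ℝ := (euclNorm z)⁻¹ • z

/-- `cos φ₀ = Tr Ω / (√p ‖Ω‖_F)`: the cosine of the angle between `Ω` and the identity. -/
noncomputable def cosAngleId {p : ℕ} (Ω : Matrix (Fin p) (Fin p) ℝ) : ℝ :=
  Matrix.trace Ω / (Real.sqrt p * frobNorm Ω)

/-!
Put `Yᵢ = xᵢxᵢᵀ - p⁻¹ I`, a vector of `ℝ^(p × p)` with the Frobenius norm. Sign flips and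
permutations of coordinates preserve the Gaussian, so `E[x xᵀ] = p⁻¹ I`: the `Yᵢ` are i.i.d.,
centred, and `‖Yᵢ‖ ≤ 1`. Since `cosh ∘ √` is convex, `cosh (λ‖s + Y‖)` lies below an affine
function of `⟪s, Y⟫` (Pinelis), so `E cosh (λ‖s + Y‖) ≤ cosh (λ‖s‖) cosh λ`; iterating gives
`E cosh (λ‖∑ Yᵢ‖) ≤ (cosh λ)ⁿ ≤ exp (nλ²/2)`, and Markov's inequality with `λ = t` bounds
`P(‖∑ Yᵢ‖ > tn)` by `2 exp (-nt²/2)`, which is at most the claimed failure probability.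
Off that event, Cauchy–Schwarz for the trace pairing gives
`|Tr (((p/n) ∑ xᵢxᵢᵀ - I) U)| ≤ (p/n) ‖∑ Yᵢ‖ ‖U‖_F ≤ t p ‖U‖_F`.
-/

open Real
open scoped RealInnerProductSpace

theorem convexOn_cosh_sqrt : ConvexOn ℝ (Set.Ici 0) fun x => cosh √x := by
  have hsum {x : ℝ} (hx : 0 ≤ x) : Summable fun k : ℕ => x ^ k / (2 * k).factorial :=
    .of_nonneg_of_le (fun k => by positivity)
      (fun k => div_le_div_of_nonneg_left (by positivity) (by positivity)
        (by exact_mod_cast Nat.factorial_le (by omega)))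
      (summable_pow_div_factorial x)
  have hseries {x : ℝ} (hx : 0 ≤ x) : cosh √x = ∑' k : ℕ, x ^ k / (2 * k).factorial := by
    simp_rw [cosh_eq_tsum, pow_mul, sq_sqrt hx]
  refine ⟨convex_Ici 0, fun x (hx : 0 ≤ x) y (hy : 0 ≤ y) a b ha hb hab => ?_⟩
  simp only [smul_eq_mul]
  rw [hseries hx, hseries hy, hseries (by positivity), ← tsum_mul_left, ← tsum_mul_left,
    ← ((hsum hx).mul_left a).tsum_add ((hsum hy).mul_left b)]
  refine (hsum (by positivity)).tsum_le_tsum (fun k => ?_)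
    (((hsum hx).mul_left a).add ((hsum hy).mul_left b))
  rw [mul_div_assoc', mul_div_assoc', ← add_div]
  gcongr
  exact (convexOn_pow k).2 hx hy ha hb hab

theorem cosh_le_of_sq_le_convexComb {u v w θ : ℝ} (hu : 0 ≤ u) (hθ₀ : 0 ≤ θ) (hθ₁ : θ ≤ 1)
    (h : u ^ 2 ≤ θ * v ^ 2 + (1 - θ) * w ^ 2) : cosh u ≤ θ * cosh v + (1 - θ) * cosh w := by
  calc cosh u ≤ cosh √(θ * v ^ 2 + (1 - θ) * w ^ 2) := by
        rw [cosh_le_cosh, abs_of_nonneg hu, abs_of_nonneg (sqrt_nonneg _)]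
        exact le_sqrt_of_sq_le h
    _ ≤ θ * cosh √(v ^ 2) + (1 - θ) * cosh √(w ^ 2) :=
        convexOn_cosh_sqrt.2 (sq_nonneg v) (sq_nonneg w) hθ₀ (sub_nonneg.2 hθ₁) (by ring)
    _ = θ * cosh v + (1 - θ) * cosh w := by rw [sqrt_sq_eq_abs, sqrt_sq_eq_abs, cosh_abs, cosh_abs]

section NormedAddCommGroup

variable {E : Type*} [NormedAddCommGroup E] {α : Type*} [MeasurableSpace α] {μ : Measure α}

theorem integrable_cosh_mul_norm [IsFiniteMeasure μ] {f : α → E} (hf : AEStronglyMeasurable f μ)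
    {C : ℝ} (hC : ∀ a, ‖f a‖ ≤ C) (lam : ℝ) : Integrable (fun a => cosh (lam * ‖f a‖)) μ := by
  have hcont : Continuous fun v : E => cosh (lam * ‖v‖) :=
    continuous_cosh.comp (continuous_const.mul continuous_norm)
  refine .of_bound (hcont.comp_aestronglyMeasurable hf) (cosh (lam * C)) (ae_of_all _ fun a => ?_)
  rw [norm_of_nonneg (cosh_pos _).le, cosh_le_cosh, abs_mul, abs_mul, abs_norm]
  exact mul_le_mul_of_nonneg_left ((hC a).trans (le_abs_self C)) (abs_nonneg lam)

theorem measure_lt_norm_le_of_integral_cosh_le [IsFiniteMeasure μ] {f : α → E}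
    (hf : AEStronglyMeasurable f μ) {C : ℝ} (hC : ∀ a, ‖f a‖ ≤ C) {lam M : ℝ} (hlam : 0 ≤ lam)
    (hM : ∫ a, cosh (lam * ‖f a‖) ∂μ ≤ M) (r : ℝ) :
    μ {a | r < ‖f a‖} ≤ ENNReal.ofReal (2 * exp (-(lam * r)) * M) := by
  set T := {a | exp (lam * r) / 2 ≤ cosh (lam * ‖f a‖)}
  have hsub : {a | r < ‖f a‖} ⊆ T := fun a (ha : r < ‖f a‖) =>
    calc exp (lam * r) / 2 ≤ exp (lam * ‖f a‖) / 2 := by gcongr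
      _ ≤ cosh (lam * ‖f a‖) := by rw [cosh_eq]; linarith [exp_pos (-(lam * ‖f a‖))]
  have hmarkov : exp (lam * r) / 2 * μ.real T ≤ M :=
    (mul_meas_ge_le_integral_of_nonneg (ae_of_all _ fun a => (cosh_pos _).le)
      (integrable_cosh_mul_norm hf hC lam) _).trans hM
  calc μ {a | r < ‖f a‖} ≤ μ T := measure_mono hsub
    _ = ENNReal.ofReal (μ.real T) := (ofReal_measureReal).symm
    _ ≤ ENNReal.ofReal (2 * exp (-(lam * r)) * M) := by
        refine ENNReal.ofReal_le_ofReal ?_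
        calc μ.real T = 2 * exp (-(lam * r)) * (exp (lam * r) / 2 * μ.real T) := by
              rw [exp_neg]; field_simp
          _ ≤ 2 * exp (-(lam * r)) * M := by gcongr

theorem integral_pi_fin_succ {F : Type*} [NormedAddCommGroup F] [NormedSpace ℝ F] {n : ℕ}
    (ν : Measure α) [SigmaFinite ν] {f : (Fin (n + 1) → α) → F}
    (hf : Integrable f (Measure.pi fun _ => ν)) :
    ∫ ω, f ω ∂(Measure.pi fun _ => ν) = ∫ x, ∫ ω, f (Fin.cons x ω) ∂(Measure.pi fun _ => ν) ∂ν := by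
  have hT := (measurePreserving_piFinSuccAbove (fun _ : Fin (n + 1) => ν) 0).symm
  have hint : Integrable (fun z => f ((MeasurableEquiv.piFinSuccAbove _ 0).symm z))
      (ν.prod (Measure.pi fun _ => ν)) :=
    (hT.integrable_comp_emb (MeasurableEquiv.measurableEmbedding _)).2 hf
  rw [← hT.integral_comp', integral_prod _ hint]
  simp [MeasurableEquiv.piFinSuccAbove_symm_apply, Fin.insertNthEquiv, Fin.insertNth_zero']

variable [InnerProductSpace ℝ E]

theorem cosh_mul_norm_add_le (s : E) {x : E} {lam b : ℝ} (hlam : 0 ≤ lam) (hx : ‖x‖ ≤ b) :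
    cosh (lam * ‖s + x‖) ≤ cosh (lam * ‖s‖) * cosh (lam * b)
      + ⟪s, x⟫ * (sinh (lam * ‖s‖) * sinh (lam * b) / (‖s‖ * b)) := by
  have hb : 0 ≤ b := (norm_nonneg x).trans hx
  rcases (mul_nonneg (norm_nonneg s) hb).eq_or_lt with hsb | hsb
  · have hsinh : sinh (lam * ‖s‖) * sinh (lam * b) = 0 := by
      rcases mul_eq_zero.1 hsb.symm with h | h <;> simp [h]
    rw [← hsb, div_zero, mul_zero, add_zero]
    calc cosh (lam * ‖s + x‖) ≤ cosh (lam * (‖s‖ + b)) := by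
          rw [cosh_le_cosh, abs_of_nonneg (by positivity), abs_of_nonneg (by positivity)]
          gcongr
          exact (norm_add_le s x).trans (by gcongr)
      _ = cosh (lam * ‖s‖) * cosh (lam * b) := by rw [mul_add, cosh_add, hsinh, add_zero]
  · have hs₀ : ‖s‖ ≠ 0 := left_ne_zero_of_mul hsb.ne'
    have hb₀ : b ≠ 0 := right_ne_zero_of_mul hsb.ne'
    have hinner : |⟪s, x⟫| ≤ ‖s‖ * b :=
      (abs_real_inner_le_norm s x).trans (mul_le_mul_of_nonneg_left hx (norm_nonneg s))
    -- `θ` makes the convex combination of `(‖s‖ - b)²` and `(‖s‖ + b)²` equal to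
    -- `‖s‖² + 2⟪s, x⟫ + b² ≥ ‖s + x‖²`.
    set θ := (‖s‖ * b - ⟪s, x⟫) / (2 * (‖s‖ * b)) with hθ
    have hθ₀ : 0 ≤ θ := div_nonneg (by linarith [le_abs_self ⟪s, x⟫]) (by positivity)
    have hθ₁ : θ ≤ 1 := (div_le_one (by positivity)).2 (by linarith [neg_abs_le ⟪s, x⟫])
    have hsq : (lam * ‖s + x‖) ^ 2
        ≤ θ * (lam * (‖s‖ - b)) ^ 2 + (1 - θ) * (lam * (‖s‖ + b)) ^ 2 := by
      have hcomb : θ * (lam * (‖s‖ - b)) ^ 2 + (1 - θ) * (lam * (‖s‖ + b)) ^ 2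
          = lam ^ 2 * (‖s‖ ^ 2 + 2 * ⟪s, x⟫ + b ^ 2) := by
        rw [hθ]
        field_simp
        ring
      rw [hcomb, mul_pow, norm_add_sq_real]
      gcongr
    calc cosh (lam * ‖s + x‖)
        ≤ θ * cosh (lam * (‖s‖ - b)) + (1 - θ) * cosh (lam * (‖s‖ + b)) :=
          cosh_le_of_sq_le_convexComb (by positivity) hθ₀ hθ₁ hsq
      _ = _ := by
          rw [hθ, mul_sub, mul_add, cosh_sub, cosh_add]
          field_simp
          ring

variable [CompleteSpace E] [IsProbabilityMeasure μ]

theorem integral_cosh_mul_norm_add_le (s : E) {lam b : ℝ} (hlam : 0 ≤ lam) {X : α → E}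
    (hX : AEStronglyMeasurable X μ) (hmean : ∫ a, X a ∂μ = 0) (hXb : ∀ a, ‖X a‖ ≤ b) :
    ∫ a, cosh (lam * ‖s + X a‖) ∂μ ≤ cosh (lam * ‖s‖) * cosh (lam * b) := by
  set K := sinh (lam * ‖s‖) * sinh (lam * b) / (‖s‖ * b)
  have hXint : Integrable X μ := .of_bound hX b (ae_of_all _ hXb)
  have hlin : Integrable (fun a => ⟪s, X a⟫ * K) μ := (hXint.const_inner s).mul_const K
  calc ∫ a, cosh (lam * ‖s + X a‖) ∂μ
      ≤ ∫ a, (cosh (lam * ‖s‖) * cosh (lam * b) + ⟪s, X a⟫ * K) ∂μ :=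
        integral_mono (integrable_cosh_mul_norm (hX.const_add s)
            (fun a => (norm_add_le _ _).trans (add_le_add le_rfl (hXb a))) lam)
          ((integrable_const _).add hlin) fun a => cosh_mul_norm_add_le s hlam (hXb a)
    _ = cosh (lam * ‖s‖) * cosh (lam * b) := by
        rw [integral_add (integrable_const _) hlin, integral_mul_const K, integral_inner hXint,
          hmean, inner_zero_right, zero_mul, add_zero, integral_const, probReal_univ, one_smul]

theorem integral_cosh_mul_norm_add_sum_le {lam b : ℝ} (hlam : 0 ≤ lam) {Y : α → E}
    (hY : StronglyMeasurable Y) (hmean : ∫ a, Y a ∂μ = 0) (hYb : ∀ a, ‖Y a‖ ≤ b) (n : ℕ) (s : E) :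
    ∫ ω, cosh (lam * ‖s + ∑ i, Y (ω i)‖) ∂(Measure.pi fun _ : Fin n => μ)
      ≤ cosh (lam * ‖s‖) * cosh (lam * b) ^ n := by
  induction n generalizing s with
  | zero => simp
  | succ n ih =>
    have hbound (ω : Fin (n + 1) → α) : ‖s + ∑ i, Y (ω i)‖ ≤ ‖s‖ + (n + 1) * b :=
      (norm_add_le _ _).trans (add_le_add le_rfl
        ((norm_sum_le_of_le Finset.univ fun i _ => hYb (ω i)).trans_eq (by simp)))
    have hsum : StronglyMeasurable fun ω : Fin (n + 1) → α => ∑ i, Y (ω i) :=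
      Finset.stronglyMeasurable_fun_sum _ fun i _ => hY.comp_measurable (measurable_pi_apply i)
    have hint := integrable_cosh_mul_norm (μ := Measure.pi fun _ => μ)
      (hsum.aestronglyMeasurable.const_add s) hbound lam
    rw [integral_pi_fin_succ μ hint]
    simp only [Fin.sum_univ_succ, Fin.cons_zero, Fin.cons_succ, ← add_assoc]
    calc ∫ x, ∫ ω, cosh (lam * ‖s + Y x + ∑ i, Y (ω i)‖) ∂(Measure.pi fun _ => μ) ∂μ
        ≤ ∫ x, cosh (lam * ‖s + Y x‖) * cosh (lam * b) ^ n ∂μ :=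
          integral_mono_of_nonneg (ae_of_all _ fun x => integral_nonneg fun ω => (cosh_pos _).le)
            ((integrable_cosh_mul_norm (hY.aestronglyMeasurable.const_add s)
              (fun a => (norm_add_le _ _).trans (add_le_add le_rfl (hYb a))) lam).mul_const _)
            (ae_of_all _ fun x => ih (s + Y x))
      _ = (∫ x, cosh (lam * ‖s + Y x‖) ∂μ) * cosh (lam * b) ^ n := integral_mul_const _ _
      _ ≤ cosh (lam * ‖s‖) * cosh (lam * b) * cosh (lam * b) ^ n := by
          gcongr
          exact integral_cosh_mul_norm_add_le s hlam hY.aestronglyMeasurable hmean hYb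
      _ = cosh (lam * ‖s‖) * cosh (lam * b) ^ (n + 1) := by ring

theorem measure_lt_norm_sum_le {b : ℝ} (hb : 0 < b) {Y : α → E} (hY : StronglyMeasurable Y)
    (hmean : ∫ a, Y a ∂μ = 0) (hYb : ∀ a, ‖Y a‖ ≤ b) (n : ℕ) {t : ℝ} (ht : 0 ≤ t) :
    (Measure.pi fun _ : Fin n => μ) {ω | n * t < ‖∑ i, Y (ω i)‖}
      ≤ ENNReal.ofReal (2 * exp (-(n * t ^ 2) / (2 * b ^ 2))) := by
  -- `λ = t / b²` minimises the Chernoff exponent `-λ n t + n λ² b² / 2`.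
  set lam := t / b ^ 2 with hlam
  have hsum : StronglyMeasurable fun ω : Fin n → α => ∑ i, Y (ω i) :=
    Finset.stronglyMeasurable_fun_sum _ fun i _ => hY.comp_measurable (measurable_pi_apply i)
  have hbound (ω : Fin n → α) : ‖∑ i, Y (ω i)‖ ≤ n * b :=
    (norm_sum_le_of_le _ fun i _ => hYb (ω i)).trans_eq (by simp)
  have hcosh : ∫ ω, cosh (lam * ‖∑ i, Y (ω i)‖) ∂(Measure.pi fun _ : Fin n => μ)
      ≤ exp (n * (lam * b) ^ 2 / 2) :=
    calc ∫ ω, cosh (lam * ‖∑ i, Y (ω i)‖) ∂(Measure.pi fun _ : Fin n => μ)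
        ≤ cosh (lam * b) ^ n := by
          simpa using integral_cosh_mul_norm_add_sum_le (by positivity) hY hmean hYb n 0
      _ ≤ exp ((lam * b) ^ 2 / 2) ^ n := by gcongr; exact cosh_le_exp_half_sq _
      _ = exp (n * (lam * b) ^ 2 / 2) := by rw [← exp_nat_mul]; ring_nf
  refine (measure_lt_norm_le_of_integral_cosh_le hsum.aestronglyMeasurable hbound
    (by positivity) hcosh _).trans_eq ?_
  rw [mul_assoc, ← exp_add]
  congr 3
  rw [hlam]
  field_simp
  ring

end NormedAddCommGroup

section Frobenius

variable {m n : Type*}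

def frobVec : Matrix m n ℝ →ₗ[ℝ] EuclideanSpace ℝ (m × n) where
  toFun A := WithLp.toLp 2 fun q => A q.1 q.2
  map_add' _ _ := rfl
  map_smul' _ _ := rfl

theorem frobVec_apply (A : Matrix m n ℝ) (q : m × n) : frobVec A q = A q.1 q.2 := rfl

variable {p : ℕ}

theorem trace_transpose_mul_self (A : Matrix (Fin p) (Fin p) ℝ) :
    Matrix.trace (Aᵀ * A) = ∑ i, ∑ j, A i j ^ 2 := by
  rw [Finset.sum_comm]
  simp [Matrix.trace, Matrix.mul_apply, sq]

theorem norm_frobVec (A : Matrix (Fin p) (Fin p) ℝ) : ‖frobVec A‖ = frobNorm A := by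
  simp [EuclideanSpace.norm_eq, frobNorm, trace_transpose_mul_self, Fintype.sum_prod_type,
    frobVec_apply]

theorem frobNorm_sq (A : Matrix (Fin p) (Fin p) ℝ) : frobNorm A ^ 2 = Matrix.trace (Aᵀ * A) :=
  sq_sqrt (by rw [trace_transpose_mul_self]; positivity)

theorem frobNorm_transpose (A : Matrix (Fin p) (Fin p) ℝ) : frobNorm Aᵀ = frobNorm A := by
  rw [frobNorm, frobNorm, Matrix.transpose_transpose, Matrix.trace_mul_comm]

theorem abs_trace_mul_le_frobNorm_mul (A B : Matrix (Fin p) (Fin p) ℝ) :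
    |Matrix.trace (A * B)| ≤ frobNorm A * frobNorm B := by
  have htrace : Matrix.trace (A * B) = inner ℝ (frobVec A) (frobVec Bᵀ) := by
    simp [Matrix.trace, Matrix.mul_apply, PiLp.inner_apply, Fintype.sum_prod_type, frobVec_apply,
      mul_comm]
  rw [htrace, ← frobNorm_transpose B, ← norm_frobVec, ← norm_frobVec]
  exact abs_real_inner_le_norm _ _

end Frobenius

section Unitize

variable {p : ℕ}

theorem unitize_dotProduct_self {z : Fin p → ℝ} (hz : z ≠ 0) : unitize z ⬝ᵥ unitize z = 1 := by
  have hzz : z ⬝ᵥ z ≠ 0 := fun h => hz (dotProduct_self_eq_zero.1 h)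
  have hsq : euclNorm z ^ 2 = z ⬝ᵥ z := sq_sqrt (dotProduct_self_star_nonneg z)
  rw [unitize, smul_dotProduct, dotProduct_smul, smul_smul, smul_eq_mul, ← mul_inv, ← sq, hsq,
    inv_mul_cancel₀ hzz]

theorem unitize_dotProduct_self_le_one (z : Fin p → ℝ) : unitize z ⬝ᵥ unitize z ≤ 1 := by
  rcases eq_or_ne z 0 with rfl | hz
  · simp [unitize]
  · exact (unitize_dotProduct_self hz).le

theorem abs_unitize_le_one (z : Fin p → ℝ) (i : Fin p) : |unitize z i| ≤ 1 := by
  rw [← sq_le_one_iff_abs_le_one, sq]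
  exact (Finset.single_le_sum (fun j _ => mul_self_nonneg (unitize z j)) (Finset.mem_univ i)).trans
    (unitize_dotProduct_self_le_one z)

theorem measurable_unitize : Measurable (unitize : (Fin p → ℝ) → Fin p → ℝ) :=
  (continuous_sqrt.measurable.comp (continuous_id.dotProduct continuous_id).measurable).inv.smul
    measurable_id

variable {ν : Measure ℝ} [IsProbabilityMeasure ν]

theorem integral_unitize_mul_unitize_of_ne (hν : ν.map Neg.neg = ν) {i j : Fin p} (hij : i ≠ j) :
    ∫ z, unitize z i * unitize z j ∂(Measure.pi fun _ : Fin p => ν) = 0 := by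
  classical
  set μ := Measure.pi fun _ : Fin p => ν
  let reflect : (Fin p → ℝ) → Fin p → ℝ := fun z k => if k = i then -z k else z k
  have hreflect : MeasurePreserving reflect μ μ :=
    measurePreserving_pi (f := fun k x => if k = i then -x else x) _ _ fun k => by
      by_cases hk : k = i
      · simpa only [hk, if_true] using (⟨measurable_neg, hν⟩ : MeasurePreserving Neg.neg ν ν)
      · simp only [hk, if_false]
        exact MeasurePreserving.id ν
  have hnorm (z : Fin p → ℝ) : euclNorm (reflect z) = euclNorm z := by
    unfold euclNorm dotProduct
    congr 1
    refine Finset.sum_congr rfl fun k _ => ?_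
    by_cases hk : k = i <;> simp [reflect, hk]
  have hodd (z : Fin p → ℝ) :
      unitize (reflect z) i * unitize (reflect z) j = -(unitize z i * unitize z j) := by
    simp only [unitize, hnorm, Pi.smul_apply, smul_eq_mul, reflect, ↓reduceIte, if_neg hij.symm]
    ring
  have hF : Measurable fun z : Fin p → ℝ => unitize z i * unitize z j :=
    measurable_unitize.eval.mul measurable_unitize.eval
  have h : ∫ z, unitize z i * unitize z j ∂μ = -∫ z, unitize z i * unitize z j ∂μ :=
    calc ∫ z, unitize z i * unitize z j ∂μ
        = ∫ z, unitize (reflect z) i * unitize (reflect z) j ∂μ := by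
          rw [← integral_map hreflect.measurable.aemeasurable hF.aestronglyMeasurable,
            hreflect.map_eq]
      _ = -∫ z, unitize z i * unitize z j ∂μ := by simp only [hodd, integral_neg]
  linarith

theorem integral_unitize_sq (hν : ν {0} = 0) (i : Fin p) :
    ∫ z, unitize z i ^ 2 ∂(Measure.pi fun _ : Fin p => ν) = (p : ℝ)⁻¹ := by
  set μ := Measure.pi fun _ : Fin p => ν
  have hsymm (j : Fin p) : ∫ z, unitize z j ^ 2 ∂μ = ∫ z, unitize z i ^ 2 ∂μ := by
    let e := MeasurableEquiv.arrowCongr' (Equiv.swap i j) (MeasurableEquiv.refl ℝ)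
    have he : MeasurePreserving e μ μ :=
      measurePreserving_arrowCongr' _ _ _ _ fun _ => MeasurePreserving.id ν
    have happly (z : Fin p → ℝ) (k : Fin p) : e z k = z (Equiv.swap i j k) := rfl
    have hnorm (z : Fin p → ℝ) : euclNorm (e z) = euclNorm z := by
      simp only [euclNorm, dotProduct, happly, Equiv.sum_comp (Equiv.swap i j) fun k => z k * z k]
    rw [← he.integral_comp']
    simp only [unitize, hnorm, Pi.smul_apply, happly, Equiv.swap_apply_right]
  have hsphere : ∀ᵐ z ∂μ, ∑ j, unitize z j ^ 2 = 1 := by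
    have hne : ∀ᵐ z ∂μ, z ≠ 0 :=
      measure_mono_null (fun z (hz : ¬ z ≠ 0) => show z i ∈ ({0} : Set ℝ) by simp [not_not.1 hz])
        (Measure.pi_eval_preimage_null _ hν)
    filter_upwards [hne] with z hz
    simpa [dotProduct, sq] using unitize_dotProduct_self hz
  have hsum : ∑ j, ∫ z, unitize z j ^ 2 ∂μ = 1 := by
    have hint (j : Fin p) : Integrable (fun z => unitize z j ^ 2) μ :=
      .of_bound (measurable_unitize.eval.pow_const 2).aestronglyMeasurable 1
        (ae_of_all _ fun z => by simpa [abs_le] using abs_unitize_le_one z j)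
    rw [← integral_finsetSum _ fun j _ => hint j]
    simp [integral_congr_ae hsphere]
  simp only [hsymm, Finset.sum_const, Finset.card_univ, Fintype.card_fin, nsmul_eq_mul] at hsum
  exact eq_inv_of_mul_eq_one_right hsum

end Unitize

section CenteredOuter

variable {p : ℕ}

noncomputable def centeredOuter (z : Fin p → ℝ) : EuclideanSpace ℝ (Fin p × Fin p) :=
  frobVec (vecMulVec (unitize z) (unitize z) - (p : ℝ)⁻¹ • 1)

theorem centeredOuter_apply (z : Fin p → ℝ) (q : Fin p × Fin p) :
    centeredOuter z q
      = unitize z q.1 * unitize z q.2 - (p : ℝ)⁻¹ * (1 : Matrix (Fin p) (Fin p) ℝ) q.1 q.2 :=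
  rfl

theorem measurable_centeredOuter : Measurable (centeredOuter : (Fin p → ℝ) → _) :=
  (WithLp.measurable_toLp 2 _).comp <| measurable_pi_lambda _ fun _ =>
    (measurable_unitize.eval.mul measurable_unitize.eval).sub measurable_const

theorem norm_centeredOuter_le_one (z : Fin p → ℝ) : ‖centeredOuter z‖ ≤ 1 := by
  set S := unitize z ⬝ᵥ unitize z with hS
  have hS₀ : 0 ≤ S := by simpa using dotProduct_self_star_nonneg (unitize z)
  have hS₁ : S ≤ 1 := unitize_dotProduct_self_le_one z
  have hq₀ : 0 ≤ (p : ℝ)⁻¹ := by positivity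
  have hq₁ : (p : ℝ)⁻¹ ≤ 1 := Nat.cast_inv_le_one p
  have hpq : (p : ℝ) * (p : ℝ)⁻¹ ^ 2 = (p : ℝ)⁻¹ := by
    rcases eq_or_ne (p : ℝ) 0 with h | h
    · simp [h]
    · field_simp
  have hsq : ‖centeredOuter z‖ ^ 2 = S ^ 2 - 2 * (p : ℝ)⁻¹ * S + (p : ℝ)⁻¹ := by
    rw [centeredOuter, norm_frobVec, frobNorm_sq]
    simp [transpose_vecMulVec, sub_mul, mul_sub, vecMulVec_mul_vecMulVec, trace_vecMulVec,
      trace_sub, trace_smul]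
    rw [← hS]
    linear_combination hpq
  rw [← sq_le_one_iff₀ (norm_nonneg _), hsq]
  nlinarith [mul_nonneg hq₀ (sub_nonneg.2 hS₁), mul_nonneg hS₀ (sub_nonneg.2 hS₁),
    mul_nonneg hS₀ (sub_nonneg.2 hq₁)]

theorem integral_centeredOuter {ν : Measure ℝ} [IsProbabilityMeasure ν]
    (hsymm : ν.map Neg.neg = ν) (hatom : ν {0} = 0) :
    ∫ z, centeredOuter z ∂(Measure.pi fun _ : Fin p => ν) = 0 := by
  set μ := Measure.pi fun _ : Fin p => ν
  have hint : Integrable centeredOuter μ :=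
    .of_bound measurable_centeredOuter.aestronglyMeasurable 1
      (ae_of_all _ norm_centeredOuter_le_one)
  ext q
  have hcoord : (∫ z, centeredOuter z ∂μ) q = ∫ z, centeredOuter z q ∂μ :=
    ((EuclideanSpace.proj q).integral_comp_comm hint).symm
  have hprod : Integrable (fun z => unitize z q.1 * unitize z q.2) μ :=
    .of_bound (measurable_unitize.eval.mul measurable_unitize.eval).aestronglyMeasurable 1
      (ae_of_all _ fun z => by
        simpa [abs_mul] using mul_le_one₀ (abs_unitize_le_one z q.1) (abs_nonneg _)
          (abs_unitize_le_one z q.2))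
  simp only [hcoord, centeredOuter_apply, integral_sub hprod (integrable_const _), integral_const,
    probReal_univ, one_smul, Matrix.one_apply]
  rcases eq_or_ne q.1 q.2 with h | h
  · simpa [h, ← sq, sub_eq_zero] using integral_unitize_sq hatom q.2
  · simpa [h] using integral_unitize_mul_unitize_of_ne hsymm h

theorem smul_sum_vecMulVec_sub_one {n : ℕ} (hp : p ≠ 0) (hn : n ≠ 0) (v : Fin n → Fin p → ℝ) :
    ((p : ℝ) / n) • (∑ i, vecMulVec (v i) (v i)) - 1
      = ((p : ℝ) / n) • ∑ i, (vecMulVec (v i) (v i) - (p : ℝ)⁻¹ • 1) := by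
  rw [Finset.sum_sub_distrib, smul_sub, Finset.sum_const, Finset.card_univ, Fintype.card_fin,
    ← Nat.cast_smul_eq_nsmul ℝ, smul_smul, smul_smul]
  field_simp
  simp

theorem abs_trace_mul_le_of_norm_sum_centeredOuter_le {n : ℕ} (hp : p ≠ 0) (hn : n ≠ 0)
    {ω : Fin n → Fin p → ℝ} {t : ℝ} (hω : ‖∑ i, centeredOuter (ω i)‖ ≤ n * t)
    (U : Matrix (Fin p) (Fin p) ℝ) :
    |trace ((((p : ℝ) / n) • (∑ i, vecMulVec (unitize (ω i)) (unitize (ω i))) - 1) * U)|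
      ≤ t * p * frobNorm U := by
  rw [smul_sum_vecMulVec_sub_one hp hn]
  refine (abs_trace_mul_le_frobNorm_mul _ _).trans
    (mul_le_mul_of_nonneg_right ?_ (sqrt_nonneg _))
  rw [← norm_frobVec, map_smul, map_sum, norm_smul, norm_of_nonneg (by positivity)]
  calc (p : ℝ) / n * ‖∑ i, centeredOuter (ω i)‖ ≤ p / n * (n * t) := by gcongr
    _ = t * p := by field_simp

end CenteredOuter

instance isProbabilityMeasure_stdGaussian (p : ℕ) : IsProbabilityMeasure (stdGaussian p) := by
  unfold _root_.stdGaussian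
  infer_instance

theorem integral_centeredOuter_stdGaussian {p : ℕ} :
    ∫ z, centeredOuter z ∂(stdGaussian p) = 0 :=
  integral_centeredOuter (by simpa using gaussianReal_map_neg (μ := 0) (v := 1))
    (gaussianReal_absolutelyContinuous 0 one_ne_zero volume_singleton)

/-- For i.i.d. standard Gaussian `z₁,…,zₙ` in `ℝᵖ` and `xᵢ = zᵢ/‖zᵢ‖`,
for every `t ≥ 0`, with probability at least `1 − 2 exp(−n t²/(2(1 + 1.7 t)))` it holds
simultaneously for all symmetric `U` that `|Tr(((p/n)∑ᵢ xᵢxᵢᵀ − I) U)| ≤ t p ‖U‖_F`. -/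
theorem gradient_concentration (p n : ℕ) (hp : 1 ≤ p) (hn : 1 ≤ n) (t : ℝ) (ht : 0 ≤ t) :
    ENNReal.ofReal (1 - 2 * Real.exp (-((n : ℝ) * t ^ 2) / (2 * (1 + 1.7 * t))))
      ≤ (Measure.pi fun _ : Fin n => stdGaussian p)
        {ω | ∀ U : Matrix (Fin p) (Fin p) ℝ, U.IsSymm →
          |Matrix.trace
            ((((p : ℝ) / n) • (∑ i : Fin n, vecMulVec (unitize (ω i)) (unitize (ω i))) - 1) * U)|
            ≤ t * p * frobNorm U} := by
  set μ := Measure.pi fun _ : Fin n => stdGaussian p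
  set B := {ω : Fin n → Fin p → ℝ | n * t < ‖∑ i, centeredOuter (ω i)‖}
  have hB : MeasurableSet B := measurableSet_lt measurable_const <| Measurable.norm <|
    Finset.measurable_fun_sum _ fun i _ => measurable_centeredOuter.comp (measurable_pi_apply i)
  have htail : μ B ≤ ENNReal.ofReal (2 * exp (-(n * t ^ 2) / 2)) := by
    simpa using measure_lt_norm_sum_le one_pos measurable_centeredOuter.stronglyMeasurable
      integral_centeredOuter_stdGaussian norm_centeredOuter_le_one n ht
  have hexp : exp (-(n * t ^ 2) / 2) ≤ exp (-(n * t ^ 2) / (2 * (1 + 1.7 * t))) := by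
    rw [exp_le_exp, neg_div, neg_div, neg_le_neg_iff]
    exact div_le_div_of_nonneg_left (by positivity) two_pos (by linarith)
  calc ENNReal.ofReal (1 - 2 * exp (-(n * t ^ 2) / (2 * (1 + 1.7 * t))))
      ≤ 1 - ENNReal.ofReal (2 * exp (-(n * t ^ 2) / 2)) := by
        rw [← ENNReal.ofReal_one, ← ENNReal.ofReal_sub _ (by positivity)]
        gcongr
    _ ≤ 1 - μ B := tsub_le_tsub_left htail 1
    _ = μ Bᶜ := (prob_compl_eq_one_sub hB).symm
    _ ≤ _ := by
        refine measure_mono fun ω (hω : ¬ n * t < _) U _ => ?_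
        exact abs_trace_mul_le_of_norm_sum_centeredOuter_le (by omega) (by omega) (not_lt.1 hω) U
end

section
/- Let p ≥ 1, let Θ₀ be a symmetric positive definite p×p real matrix, let z be a standard Gaussian vector in ℝᵖ, and set x = Θ₀^{1/2} z/‖Θ₀^{1/2} z‖ (so x is Angular Central Gaussian with shape matrix Θ₀). Then for every symmetric p×p real matrix U, the expected gradient of the negative log-likelihood at the true parameter Ω₀ = Θ₀⁻¹ vanishes: E[ −Tr(Θ₀U) + p·(xᵀUx)/(xᵀΘ₀⁻¹x) ] = 0, equivalently E[ p·(xᵀUx)/(xᵀΘ₀⁻¹x) ] = Tr(Θ₀U). -/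
open MeasureTheory ProbabilityTheory Matrix

section OldSqrt

open scoped ComplexOrder

/-- The positive semidefinite square root of a positive semidefinite matrix
(the definition `Matrix.PosSemidef.sqrt` of the older Mathlib, since removed). -/
noncomputable def Matrix.PosSemidef.sqrt {n : Type*} [Fintype n] [DecidableEq n]
    {𝕜 : Type*} [RCLike 𝕜] {A : Matrix n n 𝕜} (hA : A.PosSemidef) : Matrix n n 𝕜 :=
  hA.1.eigenvectorUnitary.1 * diagonal ((↑) ∘ (Real.sqrt ∘ hA.1.eigenvalues)) *
  (star hA.1.eigenvectorUnitary : Matrix n n 𝕜)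

end OldSqrt

/-!
Write `S = Θ₀^{1/2}`. The normalization of `x = S z / ‖S z‖` cancels in the ratio, and
`S Θ₀⁻¹ S = 1`, so the integrand is `p · zᵀ(S U S)z / ‖z‖²`. The law of `z` is invariant under
flipping the sign of a coordinate and under transposing two coordinates, so
`E[z_i z_j / ‖z‖²]` vanishes for `i ≠ j` and does not depend on `i` for `i = j`; as these diagonal
terms sum to `1`, they equal `1/p`. Hence the expectation is `Tr(S U S) = Tr(Θ₀ U)`.
-/

namespace Matrix.PosSemidef

open scoped ComplexOrder

variable {n 𝕜 : Type*} [Fintype n] [DecidableEq n] [RCLike 𝕜] {A : Matrix n n 𝕜}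

theorem sqrt_mul_self (hA : A.PosSemidef) : hA.sqrt * hA.sqrt = A := by
  set V : Matrix n n 𝕜 := (hA.1.eigenvectorUnitary : Matrix n n 𝕜)
  set D : Matrix n n 𝕜 := diagonal ((↑) ∘ (Real.sqrt ∘ hA.1.eigenvalues))
  have hVV : star V * V = 1 := Unitary.coe_star_mul_self hA.1.eigenvectorUnitary
  calc hA.sqrt * hA.sqrt = V * (D * (star V * V) * D) * star V := by
        simp only [Matrix.PosSemidef.sqrt, V, D, Matrix.mul_assoc]
    _ = A := by
      rw [hVV, Matrix.mul_one, diagonal_mul_diagonal]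
      conv_rhs => rw [hA.1.spectral_theorem, Unitary.conjStarAlgAut_apply]
      congr 3
      funext i
      simp [← RCLike.ofReal_mul, Real.mul_self_sqrt (hA.eigenvalues_nonneg i)]

theorem isHermitian_sqrt (hA : A.PosSemidef) : hA.sqrt.IsHermitian := by
  simp only [IsHermitian, Matrix.PosSemidef.sqrt, conjTranspose_mul, star_eq_conjTranspose,
    conjTranspose_conjTranspose, diagonal_conjTranspose, Matrix.mul_assoc]
  congr 3
  funext i
  simp

end Matrix.PosSemidef

theorem Matrix.PosDef.sqrt_mul_inv_mul_sqrt {n : Type*} [Fintype n] [DecidableEq n]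
    {A : Matrix n n ℝ} (hA : A.PosDef) :
    hA.posSemidef.sqrt * A⁻¹ * hA.posSemidef.sqrt = 1 := by
  set S := hA.posSemidef.sqrt
  have hSS : S * S = A := hA.posSemidef.sqrt_mul_self
  have hS : IsUnit S.det := by
    refine isUnit_iff_ne_zero.mpr fun h0 => hA.det_pos.ne' ?_
    rw [← hSS, det_mul, h0, mul_zero]
  rw [← hSS, Matrix.mul_inv_rev, Matrix.mul_assoc, Matrix.mul_assoc, nonsing_inv_mul S hS,
    Matrix.mul_one, mul_nonsing_inv S hS]

theorem Matrix.dotProduct_mulVec_mulVec_self {n : Type*} [Fintype n] {R : Type*} [CommSemiring R]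
    (S M : Matrix n n R) (z : n → R) :
    S *ᵥ z ⬝ᵥ M *ᵥ (S *ᵥ z) = z ⬝ᵥ (Sᵀ * M * S) *ᵥ z := by
  rw [mulVec_mulVec, ← vecMul_transpose S z, ← dotProduct_mulVec, mulVec_mulVec, Matrix.mul_assoc]

theorem quadForm_unitize_div_quadForm_unitize {p : ℕ} (U V : Matrix (Fin p) (Fin p) ℝ)
    (w : Fin p → ℝ) :
    (unitize w ⬝ᵥ U *ᵥ unitize w) / (unitize w ⬝ᵥ V *ᵥ unitize w)
      = (w ⬝ᵥ U *ᵥ w) / (w ⬝ᵥ V *ᵥ w) := by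
  rcases eq_or_ne w 0 with rfl | hw
  · simp [unitize]
  have hc : (euclNorm w)⁻¹ ≠ 0 :=
    inv_ne_zero (Real.sqrt_ne_zero'.mpr (by simpa using dotProduct_self_star_pos_iff.mpr hw))
  simp only [unitize, mulVec_smul, dotProduct_smul, smul_dotProduct, smul_eq_mul]
  rw [mul_div_mul_left _ _ hc, mul_div_mul_left _ _ hc]

section SymmetricLaw

variable {ι : Type*} [Fintype ι] {μ : Measure (ι → ℝ)}

theorem abs_mul_div_dotProduct_self_le_one (z : ι → ℝ) (i j : ι) :
    |z i * z j / (z ⬝ᵥ z)| ≤ 1 := by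
  have hsq : ∀ k, z k ^ 2 ≤ z ⬝ᵥ z := fun k => by
    simpa [sq, dotProduct] using
      Finset.single_le_sum (fun l _ => mul_self_nonneg (z l)) (Finset.mem_univ k)
  have hz : 0 ≤ z ⬝ᵥ z := (sq_nonneg _).trans (hsq i)
  rw [abs_div, abs_mul, abs_of_nonneg hz]
  refine div_le_one_of_le₀ ?_ hz
  calc |z i| * |z j| ≤ √(z ⬝ᵥ z) * √(z ⬝ᵥ z) :=
        mul_le_mul (Real.abs_le_sqrt (hsq i)) (Real.abs_le_sqrt (hsq j)) (abs_nonneg _)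
          (Real.sqrt_nonneg _)
    _ = z ⬝ᵥ z := Real.mul_self_sqrt hz

theorem measurable_mul_div_dotProduct_self (i j : ι) :
    Measurable fun z : ι → ℝ => z i * z j / (z ⬝ᵥ z) :=
  ((measurable_pi_apply i).mul (measurable_pi_apply j)).div
    (continuous_id.dotProduct continuous_id).measurable

theorem integrable_mul_div_dotProduct_self [IsFiniteMeasure μ] (i j : ι) :
    Integrable (fun z : ι → ℝ => z i * z j / (z ⬝ᵥ z)) μ :=
  .of_bound (measurable_mul_div_dotProduct_self i j).aestronglyMeasurable 1
    (ae_of_all _ fun z => abs_mul_div_dotProduct_self_le_one z i j)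

theorem integral_mul_div_dotProduct_self_of_ne [DecidableEq ι] {i j : ι} (hij : i ≠ j)
    (hflip : MeasurePreserving (fun z : ι → ℝ => Function.update z i (-z i)) μ μ) :
    ∫ z, z i * z j / (z ⬝ᵥ z) ∂μ = 0 := by
  have hodd : ∀ z : ι → ℝ, let w := Function.update z i (-z i)
      w i * w j / (w ⬝ᵥ w) = -(z i * z j / (z ⬝ᵥ z)) := fun z => by
    have hw : Function.update z i (-z i) ⬝ᵥ Function.update z i (-z i) = z ⬝ᵥ z := by
      refine Finset.sum_congr rfl fun k _ => ?_
      rcases eq_or_ne k i with rfl | hk <;> simp [Function.update_of_ne, *]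
    simp only [hw, Function.update_self, Function.update_of_ne hij.symm]
    ring
  have hneg : ∫ z, z i * z j / (z ⬝ᵥ z) ∂μ = -∫ z, z i * z j / (z ⬝ᵥ z) ∂μ := by
    conv_lhs => rw [← hflip.map_eq]
    rw [integral_map hflip.measurable.aemeasurable
      (measurable_mul_div_dotProduct_self i j).aestronglyMeasurable]
    simp only [hodd, integral_neg]
  linarith

theorem integral_mul_self_div_dotProduct_self_eq [DecidableEq ι] (i j : ι)
    (hswap : MeasurePreserving (fun z : ι → ℝ => z ∘ Equiv.swap i j) μ μ) :
    ∫ z, z i * z i / (z ⬝ᵥ z) ∂μ = ∫ z, z j * z j / (z ⬝ᵥ z) ∂μ := by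
  have hperm : ∀ z : ι → ℝ, z ∘ Equiv.swap i j ⬝ᵥ z ∘ Equiv.swap i j = z ⬝ᵥ z := fun z =>
    Equiv.sum_comp (Equiv.swap i j) fun k => z k * z k
  conv_lhs => rw [← hswap.map_eq]
  rw [integral_map hswap.measurable.aemeasurable
    (measurable_mul_div_dotProduct_self i i).aestronglyMeasurable]
  simp only [Function.comp_apply, Equiv.swap_apply_left, hperm]

theorem sum_integral_mul_self_div_dotProduct_self [IsProbabilityMeasure μ]
    (hμ : ∀ᵐ z ∂μ, z ≠ 0) :
    ∑ i, ∫ z, z i * z i / (z ⬝ᵥ z) ∂μ = 1 := by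
  rw [← integral_finsetSum _ fun i _ => integrable_mul_div_dotProduct_self i i]
  have hone : (fun z : ι → ℝ => ∑ i, z i * z i / (z ⬝ᵥ z)) =ᵐ[μ] fun _ => 1 := by
    filter_upwards [hμ] with z hz
    rw [← Finset.sum_div]
    exact div_self (dotProduct_self_eq_zero.not.mpr hz)
  simp [integral_congr_ae hone]

theorem integral_mul_div_dotProduct_self [DecidableEq ι] [IsProbabilityMeasure μ]
    (hflip : ∀ i, MeasurePreserving (fun z : ι → ℝ => Function.update z i (-z i)) μ μ)
    (hswap : ∀ i j, MeasurePreserving (fun z : ι → ℝ => z ∘ Equiv.swap i j) μ μ)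
    (hμ : ∀ᵐ z ∂μ, z ≠ 0) (i j : ι) :
    ∫ z, z i * z j / (z ⬝ᵥ z) ∂μ = if i = j then (Fintype.card ι : ℝ)⁻¹ else 0 := by
  split_ifs with hij
  · subst hij
    have hsum := sum_integral_mul_self_div_dotProduct_self hμ
    rw [Finset.sum_congr rfl fun k _ => integral_mul_self_div_dotProduct_self_eq k i (hswap k i),
      Finset.sum_const, Finset.card_univ, nsmul_eq_mul] at hsum
    exact eq_inv_of_mul_eq_one_right hsum
  · exact integral_mul_div_dotProduct_self_of_ne hij (hflip i)

theorem dotProduct_mulVec_div_dotProduct_self (A : Matrix ι ι ℝ) (z : ι → ℝ) :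
    (z ⬝ᵥ A *ᵥ z) / (z ⬝ᵥ z) = ∑ i, ∑ j, A i j * (z i * z j / (z ⬝ᵥ z)) := by
  simp only [dotProduct, mulVec, Finset.mul_sum, Finset.sum_div]
  exact Finset.sum_congr rfl fun i _ => Finset.sum_congr rfl fun j _ => by ring

theorem integrable_dotProduct_mulVec_div_dotProduct_self [IsFiniteMeasure μ] (A : Matrix ι ι ℝ) :
    Integrable (fun z : ι → ℝ => (z ⬝ᵥ A *ᵥ z) / (z ⬝ᵥ z)) μ := by
  simp only [dotProduct_mulVec_div_dotProduct_self]
  exact integrable_finsetSum _ fun i _ => integrable_finsetSum _ fun j _ =>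
    (integrable_mul_div_dotProduct_self i j).const_mul _

theorem integral_dotProduct_mulVec_div_dotProduct_self [DecidableEq ι] [IsProbabilityMeasure μ]
    (hflip : ∀ i, MeasurePreserving (fun z : ι → ℝ => Function.update z i (-z i)) μ μ)
    (hswap : ∀ i j, MeasurePreserving (fun z : ι → ℝ => z ∘ Equiv.swap i j) μ μ)
    (hμ : ∀ᵐ z ∂μ, z ≠ 0) (A : Matrix ι ι ℝ) :
    ∫ z, (z ⬝ᵥ A *ᵥ z) / (z ⬝ᵥ z) ∂μ = A.trace / Fintype.card ι := by
  have hint : ∀ i j, Integrable (fun z : ι → ℝ => A i j * (z i * z j / (z ⬝ᵥ z))) μ :=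
    fun i j => (integrable_mul_div_dotProduct_self i j).const_mul _
  simp only [dotProduct_mulVec_div_dotProduct_self]
  rw [integral_finsetSum _ fun i _ => integrable_finsetSum _ fun j _ => hint i j, trace,
    Finset.sum_div]
  refine Finset.sum_congr rfl fun i _ => ?_
  rw [integral_finsetSum _ fun j _ => hint i j]
  simp only [integral_const_mul, integral_mul_div_dotProduct_self hflip hswap hμ, mul_ite,
    mul_zero, Finset.sum_ite_eq, Finset.mem_univ, if_true]
  rw [diag_apply, div_eq_mul_inv]

end SymmetricLaw

section StdGaussian

variable {p : ℕ}

instance : IsProbabilityMeasure (stdGaussian p) := by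
  unfold _root_.stdGaussian; infer_instance

instance [NeZero p] : NullSingletonClass (stdGaussian p) :=
  haveI := nullSingletonClass_gaussianReal (μ := 0) one_ne_zero
  Measure.pi_nullSingletonClass' (μ := fun _ : Fin p => gaussianReal 0 1)

theorem measurePreserving_update_neg_stdGaussian (i : Fin p) :
    MeasurePreserving (fun z : Fin p → ℝ => Function.update z i (-z i))
      (stdGaussian p) (stdGaussian p) := by
  have hneg : MeasurePreserving (fun x : ℝ => -x) (gaussianReal 0 1) (gaussianReal 0 1) :=
    ⟨measurable_neg, by simpa using gaussianReal_map_neg (μ := 0) (v := 1)⟩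
  convert measurePreserving_pi (fun _ => gaussianReal 0 1) (fun _ => gaussianReal 0 1)
    (f := fun k => if k = i then fun x : ℝ => -x else id)
    (fun k => by split_ifs; exacts [hneg, .id _]) using 1
  · funext z k
    rcases eq_or_ne k i with rfl | hk <;> simp [Function.update_of_ne, *]
  all_goals rfl

theorem measurePreserving_comp_swap_stdGaussian (i j : Fin p) :
    MeasurePreserving (fun z : Fin p → ℝ => z ∘ Equiv.swap i j)
      (stdGaussian p) (stdGaussian p) := by
  convert measurePreserving_piCongrLeft (fun _ : Fin p => gaussianReal 0 1) (Equiv.swap i j)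
    using 1
  · funext z k
    simp [MeasurableEquiv.piCongrLeft, Equiv.piCongrLeft]
  all_goals rfl

end StdGaussian

theorem Matrix.PosDef.quadForm_div_quadForm_inv_unitize_sqrt_mulVec {p : ℕ}
    {Θ : Matrix (Fin p) (Fin p) ℝ} (hΘ : Θ.PosDef) (U : Matrix (Fin p) (Fin p) ℝ)
    (z : Fin p → ℝ) :
    (unitize (hΘ.posSemidef.sqrt *ᵥ z) ⬝ᵥ U *ᵥ unitize (hΘ.posSemidef.sqrt *ᵥ z))
        / (unitize (hΘ.posSemidef.sqrt *ᵥ z) ⬝ᵥ Θ⁻¹ *ᵥ unitize (hΘ.posSemidef.sqrt *ᵥ z))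
      = (z ⬝ᵥ (hΘ.posSemidef.sqrt * U * hΘ.posSemidef.sqrt) *ᵥ z) / (z ⬝ᵥ z) := by
  have hS : hΘ.posSemidef.sqrtᵀ = hΘ.posSemidef.sqrt := by
    simpa using hΘ.posSemidef.isHermitian_sqrt.eq
  rw [quadForm_unitize_div_quadForm_unitize, dotProduct_mulVec_mulVec_self,
    dotProduct_mulVec_mulVec_self, hS, hΘ.sqrt_mul_inv_mul_sqrt, one_mulVec]

theorem expected_gradient_vanishes_general (p : ℕ) (hp : 1 ≤ p)
    (Θ₀ : Matrix (Fin p) (Fin p) ℝ) (hΘ₀ : Θ₀.PosDef)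
    (U : Matrix (Fin p) (Fin p) ℝ) :
    (∫ z, (-(Matrix.trace (Θ₀ * U))
        + (p : ℝ) * ((unitize (hΘ₀.posSemidef.sqrt.mulVec z)
              ⬝ᵥ U.mulVec (unitize (hΘ₀.posSemidef.sqrt.mulVec z)))
            / (unitize (hΘ₀.posSemidef.sqrt.mulVec z)
              ⬝ᵥ (Θ₀⁻¹).mulVec (unitize (hΘ₀.posSemidef.sqrt.mulVec z))))) ∂(stdGaussian p) = 0)
    ∧ (∫ z, (p : ℝ) * ((unitize (hΘ₀.posSemidef.sqrt.mulVec z)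
              ⬝ᵥ U.mulVec (unitize (hΘ₀.posSemidef.sqrt.mulVec z)))
            / (unitize (hΘ₀.posSemidef.sqrt.mulVec z)
              ⬝ᵥ (Θ₀⁻¹).mulVec (unitize (hΘ₀.posSemidef.sqrt.mulVec z)))) ∂(stdGaussian p)
        = Matrix.trace (Θ₀ * U)) := by
  have : NeZero p := ⟨by omega⟩
  simp only [hΘ₀.quadForm_div_quadForm_inv_unitize_sqrt_mulVec]
  set S := hΘ₀.posSemidef.sqrt
  have htrace : (S * U * S).trace = (Θ₀ * U).trace := by
    rw [trace_mul_comm, ← Matrix.mul_assoc, hΘ₀.posSemidef.sqrt_mul_self]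
  have hmean : ∫ z, (p : ℝ) * ((z ⬝ᵥ (S * U * S) *ᵥ z) / (z ⬝ᵥ z)) ∂stdGaussian p
      = (Θ₀ * U).trace := by
    rw [integral_const_mul, integral_dotProduct_mulVec_div_dotProduct_self
      measurePreserving_update_neg_stdGaussian measurePreserving_comp_swap_stdGaussian
      (Measure.ae_ne _ 0), Fintype.card_fin, htrace, mul_div_cancel₀ _ (NeZero.ne _)]
  refine ⟨?_, hmean⟩
  rw [integral_add (integrable_const _)
    ((integrable_dotProduct_mulVec_div_dotProduct_self _).const_mul _), hmean]
  simp

/-- For `x = Θ₀^{1/2}z/‖Θ₀^{1/2}z‖` with `z` standard Gaussian in `ℝᵖ` and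
`Θ₀` symmetric positive definite, the expected gradient of the ACG negative log-likelihood at
the true parameter `Ω₀ = Θ₀⁻¹` vanishes: `E[−Tr(Θ₀U) + p(xᵀUx)/(xᵀΘ₀⁻¹x)] = 0`, equivalently
`E[p(xᵀUx)/(xᵀΘ₀⁻¹x)] = Tr(Θ₀U)`, for every symmetric `U`. -/
theorem expected_gradient_vanishes (p : ℕ) (hp : 1 ≤ p)
    (Θ₀ : Matrix (Fin p) (Fin p) ℝ) (hΘ₀ : Θ₀.PosDef)
    (U : Matrix (Fin p) (Fin p) ℝ) (hU : U.IsSymm) :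
    (∫ z, (-(Matrix.trace (Θ₀ * U))
        + (p : ℝ) * ((unitize (hΘ₀.posSemidef.sqrt.mulVec z)
              ⬝ᵥ U.mulVec (unitize (hΘ₀.posSemidef.sqrt.mulVec z)))
            / (unitize (hΘ₀.posSemidef.sqrt.mulVec z)
              ⬝ᵥ (Θ₀⁻¹).mulVec (unitize (hΘ₀.posSemidef.sqrt.mulVec z))))) ∂(stdGaussian p) = 0)
    ∧ (∫ z, (p : ℝ) * ((unitize (hΘ₀.posSemidef.sqrt.mulVec z)
              ⬝ᵥ U.mulVec (unitize (hΘ₀.posSemidef.sqrt.mulVec z)))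
            / (unitize (hΘ₀.posSemidef.sqrt.mulVec z)
              ⬝ᵥ (Θ₀⁻¹).mulVec (unitize (hΘ₀.posSemidef.sqrt.mulVec z)))) ∂(stdGaussian p)
        = Matrix.trace (Θ₀ * U)) :=
  expected_gradient_vanishes_general p hp Θ₀ hΘ₀ U
end

section
/- Let p ≥ 1, let Θ₀ be a symmetric positive definite p×p real matrix, Ω₀ = Θ₀⁻¹, and cos φ₀ = Tr(Ω₀)/(√p ‖Ω₀‖_F). Then for every symmetric p×p real matrix U with Tr(U) = 0, ( p·Tr((Θ₀U)²) − (Tr(Θ₀U))² ) / (p+2) ≥ (p/(p+2))·cos²φ₀·‖Θ₀^{1/2} U Θ₀^{1/2}‖_F². -/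
open MeasureTheory ProbabilityTheory Matrix

/-- The square root of a positive semidefinite matrix, as `Matrix.PosSemidef.sqrt` was defined
in the older Mathlib. -/
noncomputable def posSemidefSqrt {p : ℕ} {A : Matrix (Fin p) (Fin p) ℝ} (hA : A.PosSemidef) :
    Matrix (Fin p) (Fin p) ℝ :=
  hA.1.eigenvectorUnitary.1 * diagonal ((↑) ∘ (√·) ∘ hA.1.eigenvalues) *
  (star hA.1.eigenvectorUnitary : Matrix (Fin p) (Fin p) ℝ)

/-!
Put `S = Θ₀^{1/2}` and `V = S U S`, and use the Frobenius inner product. The left-hand side is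
`(p ‖V‖² - ⟪I, V⟫²) / (p + 2)`, and `Tr U = 0` says `V ⊥ Ω₀`, because `S Ω₀ S = I`. For `V ⊥ Ω₀`,
Cauchy–Schwarz against the component of `I` orthogonal to `Ω₀` gives
`⟪I, V⟫² ≤ ‖I‖² sin² ∠(I, Ω₀) ‖V‖² = p (1 - cos² φ₀) ‖V‖²`.
-/

open InnerProductGeometry
open scoped MatrixOrder RealInnerProductSpace

theorem InnerProductGeometry.inner_sq_le_norm_sq_mul_sin_angle_sq
    {E : Type*} [NormedAddCommGroup E] [InnerProductSpace ℝ E] (e : E) {v w : E} (h : ⟪w, v⟫ = 0) :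
    ⟪e, v⟫ ^ 2 ≤ ‖e‖ ^ 2 * Real.sin (angle e w) ^ 2 * ‖v‖ ^ 2 := by
  -- only the component `u` of `e` orthogonal to `w` pairs with `v`, and `‖u‖ = ‖e‖ sin (angle e w)`
  set u := e - (⟪e, w⟫ / ‖w‖ ^ 2) • w
  have huv : ⟪u, v⟫ = ⟪e, v⟫ := by simp [u, inner_sub_left, inner_smul_left, h]
  have hu : ‖u‖ ^ 2 = ‖e‖ ^ 2 * Real.sin (angle e w) ^ 2 := by
    rcases eq_or_ne w 0 with rfl | hw
    · simp [u, angle_zero_right]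
    have hw' : ‖w‖ ≠ 0 := norm_ne_zero_iff.2 hw
    have hcos := cos_angle_mul_norm_mul_norm e w
    have hsc := Real.sin_sq_add_cos_sq (angle e w)
    rw [norm_sub_sq_real, norm_smul, inner_smul_right, Real.norm_eq_abs, mul_pow, sq_abs]
    field_simp
    linear_combination (-(‖e‖ ^ 2 * ‖w‖ ^ 2)) * hsc
      + (‖e‖ * ‖w‖ * Real.cos (angle e w) + ⟪e, w⟫) * hcos
  rw [← hu, ← huv, ← mul_pow, ← sq_abs]
  exact pow_le_pow_left₀ (abs_nonneg _) (abs_real_inner_le_norm u v) 2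

namespace Matrix

variable {m n R : Type*} [Fintype m] [Fintype n]

/-- The Euclidean structure of `ℝ^(n × m)` is the Frobenius inner product of matrices. -/
noncomputable def frobeniusVec (A : Matrix m n ℝ) : EuclideanSpace ℝ (n × m) := WithLp.toLp 2 A.vec

theorem inner_frobeniusVec (A B : Matrix m n ℝ) :
    ⟪frobeniusVec A, frobeniusVec B⟫ = (Aᵀ * B).trace := by
  rw [EuclideanSpace.inner_eq_star_dotProduct, star_trivial, dotProduct_comm]
  exact vec_dotProduct_vec A B

theorem norm_frobeniusVec {p : ℕ} (A : Matrix (Fin p) (Fin p) ℝ) :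
    ‖frobeniusVec A‖ = frobNorm A := by
  rw [norm_eq_sqrt_real_inner, inner_frobeniusVec, frobNorm]

theorem norm_frobeniusVec_one (p : ℕ) : ‖frobeniusVec (1 : Matrix (Fin p) (Fin p) ℝ)‖ = √p := by
  simp [norm_frobeniusVec, frobNorm]

theorem cosAngleId_eq_cos_angle {p : ℕ} (Ω : Matrix (Fin p) (Fin p) ℝ) :
    cosAngleId Ω = Real.cos (angle (frobeniusVec 1) (frobeniusVec Ω)) := by
  rw [cos_angle, inner_frobeniusVec, transpose_one, one_mul, norm_frobeniusVec_one,
    norm_frobeniusVec, cosAngleId]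

theorem mul_inv_mul_of_mul_self_eq [DecidableEq n] [CommRing R] {S Θ : Matrix n n R}
    (h : S * S = Θ) (hΘ : IsUnit Θ.det) : S * Θ⁻¹ * S = 1 := by
  have hS : IsUnit S.det := by
    rw [← h, det_mul] at hΘ
    exact isUnit_of_mul_isUnit_left hΘ
  rw [← h, mul_inv_rev, ← Matrix.mul_assoc, mul_nonsing_inv _ hS, Matrix.one_mul,
    nonsing_inv_mul _ hS]

section congruence

variable [CommRing R] {S Θ : Matrix n n R} (h : S * S = Θ) (U : Matrix n n R)
include h

theorem trace_mul_eq_trace_conj : (Θ * U).trace = (S * U * S).trace := by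
  rw [← h, Matrix.mul_assoc, trace_mul_comm, Matrix.mul_assoc]

theorem trace_mul_mul_eq_trace_conj_sq :
    (Θ * U * (Θ * U)).trace = (S * U * S * (S * U * S)).trace := by
  rw [← h]
  simp only [Matrix.mul_assoc]
  rw [trace_mul_comm S]
  simp only [Matrix.mul_assoc]

theorem trace_inv_mul_conj [DecidableEq n] (hΘ : IsUnit Θ.det) :
    (Θ⁻¹ * (S * U * S)).trace = U.trace := by
  rw [← Matrix.mul_assoc, trace_mul_comm, ← Matrix.mul_assoc, ← Matrix.mul_assoc,
    mul_inv_mul_of_mul_self_eq h hΘ, Matrix.one_mul]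

end congruence

variable {p : ℕ} {A : Matrix (Fin p) (Fin p) ℝ}

theorem posSemidefSqrt_eq_sqrt (hA : A.PosSemidef) : posSemidefSqrt hA = CFC.sqrt A := by
  rw [CFC.sqrt_eq_cfc, cfc_nnreal_eq_real _ A, hA.1.cfc_eq, IsHermitian.cfc,
    Unitary.conjStarAlgAut_apply]
  simp [posSemidefSqrt, Function.comp_def, Real.coe_sqrt, Real.coe_toNNReal',
    hA.eigenvalues_nonneg]

theorem posSemidefSqrt_mul_self (hA : A.PosSemidef) :
    posSemidefSqrt hA * posSemidefSqrt hA = A := by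
  rw [posSemidefSqrt_eq_sqrt]
  exact CFC.sqrt_mul_sqrt_self A hA.nonneg

theorem transpose_posSemidefSqrt (hA : A.PosSemidef) :
    (posSemidefSqrt hA)ᵀ = posSemidefSqrt hA := by
  rw [posSemidefSqrt_eq_sqrt, ← conjTranspose_eq_transpose_of_trivial]
  exact (CFC.sqrt_nonneg A).posSemidef.isHermitian

end Matrix

theorem hessian_lower_bound_traceless_general (p : ℕ)
    (Θ₀ : Matrix (Fin p) (Fin p) ℝ) (hΘ₀ : Θ₀.PosDef)
    (U : Matrix (Fin p) (Fin p) ℝ) (hU : U.IsSymm) (htr : Matrix.trace U = 0) :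
    ((p : ℝ) * Matrix.trace ((Θ₀ * U) * (Θ₀ * U)) - (Matrix.trace (Θ₀ * U)) ^ 2) / ((p : ℝ) + 2)
      ≥ ((p : ℝ) / ((p : ℝ) + 2)) * (cosAngleId Θ₀⁻¹) ^ 2
          * (frobNorm (posSemidefSqrt hΘ₀.posSemidef * U * posSemidefSqrt hΘ₀.posSemidef)) ^ 2 := by
  set S := posSemidefSqrt hΘ₀.posSemidef
  have hSS : S * S = Θ₀ := posSemidefSqrt_mul_self _
  have hdet : IsUnit Θ₀.det := hΘ₀.isUnit.map detMonoidHom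
  have hVT : (S * U * S)ᵀ = S * U * S := by
    rw [transpose_mul, transpose_mul, transpose_posSemidefSqrt, hU.eq, Matrix.mul_assoc]
  set e := frobeniusVec (1 : Matrix (Fin p) (Fin p) ℝ)
  set v := frobeniusVec (S * U * S)
  set w := frobeniusVec Θ₀⁻¹
  have hev : ⟪e, v⟫ = (Θ₀ * U).trace := by
    rw [inner_frobeniusVec, transpose_one, Matrix.one_mul, trace_mul_eq_trace_conj hSS]
  have hvv : ‖v‖ ^ 2 = (Θ₀ * U * (Θ₀ * U)).trace := by
    rw [← real_inner_self_eq_norm_sq, inner_frobeniusVec, hVT, trace_mul_mul_eq_trace_conj_sq hSS]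
  have hwv : ⟪w, v⟫ = 0 := by
    rw [inner_frobeniusVec, ← conjTranspose_eq_transpose_of_trivial, hΘ₀.inv.isHermitian.eq,
      trace_inv_mul_conj hSS U hdet, htr]
  have hee : ‖e‖ ^ 2 = p := by rw [norm_frobeniusVec_one, Real.sq_sqrt p.cast_nonneg]
  have key := inner_sq_le_norm_sq_mul_sin_angle_sq e hwv
  rw [← norm_frobeniusVec, cosAngleId_eq_cos_angle, ← hev, ← hvv, ge_iff_le, div_mul_eq_mul_div,
    div_mul_eq_mul_div]
  gcongr
  rw [hee, Real.sin_sq] at key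
  linarith

/-- For `Θ₀` symmetric positive definite with `Ω₀ = Θ₀⁻¹` and
`cos φ₀ = Tr(Ω₀)/(√p ‖Ω₀‖_F)`, every symmetric `U` with `Tr U = 0` satisfies
`(p·Tr((Θ₀U)²) − (Tr(Θ₀U))²)/(p+2) ≥ (p/(p+2))·cos²φ₀·‖Θ₀^{1/2}UΘ₀^{1/2}‖_F²`. -/
theorem hessian_lower_bound_traceless (p : ℕ) (hp : 1 ≤ p)
    (Θ₀ : Matrix (Fin p) (Fin p) ℝ) (hΘ₀ : Θ₀.PosDef)
    (U : Matrix (Fin p) (Fin p) ℝ) (hU : U.IsSymm) (htr : Matrix.trace U = 0) :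
    ((p : ℝ) * Matrix.trace ((Θ₀ * U) * (Θ₀ * U)) - (Matrix.trace (Θ₀ * U)) ^ 2) / ((p : ℝ) + 2)
      ≥ ((p : ℝ) / ((p : ℝ) + 2)) * (cosAngleId Θ₀⁻¹) ^ 2
          * (frobNorm (posSemidefSqrt hΘ₀.posSemidef * U * posSemidefSqrt hΘ₀.posSemidef)) ^ 2 :=
  hessian_lower_bound_traceless_general p Θ₀ hΘ₀ U hU htr
end
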